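/- arXiv:2406.17693 — 6 statements merged into one kernel-verified Lean document; each statement's English description precedes it below -/
import Mathlib

section
/- A language L over A = 𝒫(Σ) is monotone if and only if there exists a preorder ⊑ on the quotient monoid M_L = A*/∼_L that is compatible with the monoid product, included in the syntactic order induced by ≤_L, and such that u ≤ v (letterwise inclusion, same length) implies h(u) ⊑ h(v), where h : A* → M_L is the canonical projection. -/
abbrev Word (σ : Type*) := List (Set σ)

def WLe {σ : Type*} (u v : Word σ) : Prop :=
  u.length = v.length ∧
    ∀ (i : ℕ) (hu : i < u.length) (hv : i < v.length), u.get ⟨i, hu⟩ ⊆ v.get ⟨i, hv⟩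

def Mono {σ : Type*} (L : Set (Word σ)) : Prop :=
  ∀ ⦃u v : Word σ⦄, u ∈ L → WLe u v → v ∈ L

def SynLe {σ : Type*} (L : Set (Word σ)) (u v : Word σ) : Prop :=
  ∀ x y : Word σ, x ++ u ++ y ∈ L → x ++ v ++ y ∈ L

/-- The syntactic congruence `∼_L` as a setoid on words. -/
def synSetoid {σ : Type*} (L : Set (Word σ)) : Setoid (Word σ) where
  r u v := SynLe L u v ∧ SynLe L v u
  iseqv := by
    refine ⟨fun u => ⟨fun x y h => h, fun x y h => h⟩, fun h => ⟨h.2, h.1⟩, ?_⟩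
    rintro u v w ⟨h1, h2⟩ ⟨h3, h4⟩
    exact ⟨fun x y h => h3 x y (h1 x y h), fun x y h => h2 x y (h4 x y h)⟩

/-- The syntactic monoid `M_L = A*/∼_L` (as a quotient type; the product is
induced by concatenation via the canonical projection). -/
abbrev SynMonoid {σ : Type*} (L : Set (Word σ)) := Quotient (synSetoid L)

/-- Canonical projection `h : A* → M_L`. -/
def synProj {σ : Type*} (L : Set (Word σ)) (u : Word σ) : SynMonoid L :=
  Quotient.mk (synSetoid L) u

lemma wle_forall₂ {σ : Type*} {u v : Word σ} : WLe u v ↔ List.Forall₂ (· ⊆ ·) u v := by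
  rw [List.forall₂_iff_get]; rfl

lemma wle_context {σ : Type*} {u v : Word σ} (x y : Word σ) (h : WLe u v) :
    WLe (x ++ u ++ y) (x ++ v ++ y) := by
  rw [wle_forall₂] at h ⊢
  exact List.rel_append (List.rel_append (List.forall₂_refl x) h) (List.forall₂_refl y)

/-- A language `L` is monotone iff there is a preorder `⊑` on the syntactic
monoid `M_L`, compatible with the product, included in the syntactic order,
such that `u ≤ v` (letterwise inclusion) implies `h(u) ⊑ h(v)`. -/
theorem stmt_13 (σ : Type*) [Fintype σ] (L : Set (Word σ)) :
    Mono L ↔ ∃ R : SynMonoid L → SynMonoid L → Prop,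
      Reflexive R ∧ Transitive R ∧
      (∀ u v u' v' : Word σ, R (synProj L u) (synProj L v) → R (synProj L u') (synProj L v') →
        R (synProj L (u ++ u')) (synProj L (v ++ v'))) ∧
      (∀ u v : Word σ, R (synProj L u) (synProj L v) → SynLe L u v) ∧
      (∀ u v : Word σ, WLe u v → R (synProj L u) (synProj L v)) := by
  constructor
  · intro hL
    refine ⟨fun m n => Quotient.liftOn₂ m n (SynLe L)
      (fun a b c d hac hbd => propext ⟨fun h x y hxy => hbd.1 x y (h x y (hac.2 x y hxy)),
        fun h x y hxy => hbd.2 x y (h x y (hac.1 x y hxy))⟩), ?_, ?_, ?_, ?_, ?_⟩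
    · intro m; induction m using Quotient.ind; exact fun x y h => h
    · intro m n p; induction m using Quotient.ind; induction n using Quotient.ind
      induction p using Quotient.ind
      exact fun h1 h2 x y hxy => h2 x y (h1 x y hxy)
    · intro u v u' v' h1 h2 x y hxy
      have hxy' : x ++ v ++ (u' ++ y) ∈ L := by
        apply h1; simpa only [List.append_assoc] using hxy
      have := h2 (x ++ v) y (by simpa only [List.append_assoc] using hxy')
      simpa only [List.append_assoc] using this
    · exact fun u v h => h
    · intro u v h x y hxy
      exact hL hxy (wle_context x y h)
  · rintro ⟨R, _, _, _, hsyn, hwle⟩ u v hu huv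
    have := hsyn u v (hwle u v huv) [] [] (by simpa using hu)
    simpa using this
end

section
/- If a surjective monoid morphism h : A* → M recognizes L (i.e., L = h⁻¹(h(L))), then L is monotone if and only if for all letters s ⊆ s' in A = 𝒫(Σ) and all m, n ∈ M: m·h(s)·n ∈ h(L) implies m·h(s')·n ∈ h(L). -/
lemma wle_cons {σ : Type*} {a b : Set σ} {u v : Word σ}
    (hab : WLe (a :: u) (b :: v)) : a ⊆ b ∧ WLe u v := by
  obtain ⟨hl, hi⟩ := hab
  refine ⟨hi 0 (Nat.succ_pos _) (Nat.succ_pos _), Nat.succ_injective hl, ?_⟩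
  intro i hu hv
  exact hi (i + 1) (Nat.succ_lt_succ hu) (Nat.succ_lt_succ hv)

/-- If a surjective monoid morphism `h : A* → M` recognizes `L`
(`L = h⁻¹(h(L))`), then `L` is monotone iff for all letters `s ⊆ s'` and all
`m n ∈ M`, `m·h(s)·n ∈ h(L)` implies `m·h(s')·n ∈ h(L)`. -/
theorem stmt_14 (σ : Type*) [Fintype σ] (M : Type*) [Monoid M]
    (h : Word σ → M)
    (hone : h [] = 1)
    (hmul : ∀ u v : Word σ, h (u ++ v) = h u * h v)
    (hsurj : Function.Surjective h)
    (L : Set (Word σ))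
    (hrec : ∀ w : Word σ, w ∈ L ↔ h w ∈ h '' L) :
    Mono L ↔ ∀ s s' : Set σ, s ⊆ s' → ∀ m n : M,
      m * h [s] * n ∈ h '' L → m * h [s'] * n ∈ h '' L := by
  constructor
  · intro hmono s s' hss m n hm
    obtain ⟨u, rfl⟩ := hsurj m
    obtain ⟨v, rfl⟩ := hsurj n
    have key : ∀ c : Set σ, h u * h [c] * h v = h (u ++ [c] ++ v) := by
      intro c; rw [hmul, hmul]
    rw [key] at hm
    have humem : u ++ [s] ++ v ∈ L := (hrec _).2 hm
    have hle : WLe (u ++ [s] ++ v) (u ++ [s'] ++ v) := by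
      constructor
      · simp
      · have emid : ∀ (c : Set σ) (hc : u.length < (u ++ [c] ++ v).length),
            (u ++ [c] ++ v)[u.length] = c := by
          intro c hc
          rw [List.getElem_append_left (by simp)]
          rw [List.getElem_append_right (le_refl _)]
          simp
        have ehigh : ∀ (c : Set σ) (i : ℕ) (hi : u.length < i)
            (hc : i < (u ++ [c] ++ v).length),
            (u ++ [c] ++ v)[i] = v[i - (u.length + 1)]'(by simp at hc ⊢; omega) := by
          intro c i hi hc
          rw [List.getElem_append_right (by simp; omega)]
          congr 1
          simp
        intro i hu' hv'
        simp only [List.get_eq_getElem]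
        rcases lt_trichotomy i u.length with hi | hi | hi
        · rw [List.getElem_append_left (by simp; omega),
            List.getElem_append_left hi,
            List.getElem_append_left (show i < (u ++ [s']).length by simp; omega),
            List.getElem_append_left hi]
        · subst hi
          rw [emid s hu', emid s' hv']
          exact hss
        · rw [ehigh s i hi hu', ehigh s' i hi hv']
    have := hmono humem hle
    rw [key]
    exact (hrec _).1 this
  · intro hyp
    have key : ∀ u v : Word σ, WLe u v → ∀ m : M,
        m * h u ∈ h '' L → m * h v ∈ h '' L := by
      intro u
      induction u with
      | nil =>
        intro v hle m hm
        have : v = [] := List.length_eq_zero_iff.1 hle.1.symm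
        subst this; exact hm
      | cons a u ih =>
        intro v hle m hm
        obtain ⟨b, v', rfl⟩ : ∃ b v', v = b :: v' := by
          cases v with
          | nil => simp [WLe] at hle
          | cons b v' => exact ⟨b, v', rfl⟩
        obtain ⟨hab, hle'⟩ := wle_cons hle
        have e1 : h (a :: u) = h [a] * h u := by
          rw [← hmul]; rfl
        have e2 : h (b :: v') = h [b] * h v' := by
          rw [← hmul]; rfl
        rw [e1, ← mul_assoc] at hm
        have h1 := ih v' hle' (m * h [a]) hm
        rw [mul_assoc] at h1
        -- now replace a by b using hyp
        have h2 := hyp a b hab m (h v') (by rw [mul_assoc]; exact h1)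
        rw [e2, ← mul_assoc]
        exact h2
    intro u v hu hle
    have := key u v hle 1 (by rw [one_mul]; exact (hrec u).1 hu)
    rw [one_mul] at this
    exact (hrec v).2 this
end

section
/- The monotone closure of a 'polynomial' language is FO⁺-definable: for a language of the form L = A₀*·s₀·A₁*·s₁·⋯·s_t·A_{t+1}*, where each s_i ∈ A is a letter and each A_i ⊆ A is a subalphabet, the upward monotone closure L↑ equals the language of words w for which there exist positions x₀ < x₁ < ⋯ < x_t such that s_i ⊆ w[x_i] for each i, and for every position y strictly between x_{i-1} and x_i (with the conventions x_{-1} = −∞, x_{t+1} = +∞), the letter w[y] contains some letter of A_i as a subset. -/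
def UpClos {σ : Type*} (L : Set (Word σ)) : Set (Word σ) := {v | ∃ u ∈ L, WLe u v}

/-- The polynomial language `A₀*·s₀·A₁*·s₁·⋯·s_t·A_{t+1}*`: words obtained as an
interleaving of words over the subalphabets `Asub i` separated by the single
letters `s i`. -/
def PolyLang {σ : Type*} (t : ℕ) (s : Fin (t + 1) → Set σ)
    (Asub : Fin (t + 2) → Set (Set σ)) : Set (Word σ) :=
  {w | ∃ ws : Fin (t + 2) → Word σ,
    (∀ i : Fin (t + 2), ∀ c ∈ ws i, c ∈ Asub i) ∧
    w = (List.ofFn (fun i : Fin (t + 1) => ws i.castSucc ++ [s i])).flatten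
          ++ ws (Fin.last (t + 1))}

/-!
A word of `A₀*·s₀·⋯·s_t·A_{t+1}*` is the same as a word with positions `x₀ < ⋯ < x_t` carrying
the letters `s_i`, every other position carrying a letter of the subalphabet of its gap; this
follows by induction on `t`, peeling off the prefix `A₀*·s₀`. Passing to the upward closure
relaxes "equals `s_i`" to "contains `s_i`" and "lies in `A_i`" to "contains a letter of `A_i`".
Conversely, a word satisfying the relaxed conditions lies above the word obtained by replacing
each anchor letter by `s_i` and each gap letter by a letter of `A_i` it contains; this is well
defined because every position is an anchor or lies in exactly one gap.
-/

open scoped Finset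

section Gaps

variable {n : ℕ}

/-- `y` lies strictly between `x (i - 1)` and `x i`, where a missing anchor imposes no bound. -/
def InGap (x : Fin n → ℕ) (i : Fin (n + 1)) (y : ℕ) : Prop :=
  (∀ j : Fin n, j.succ = i → x j < y) ∧ (∀ j : Fin n, j.castSucc = i → y < x j)

variable {x : Fin n → ℕ}

theorem inGap_iff (hx : StrictMono x) {i : Fin (n + 1)} {y : ℕ} :
    InGap x i y ↔ ∀ j : Fin n, (j.castSucc < i → x j < y) ∧ (i ≤ j.castSucc → y < x j) := by
  refine ⟨fun ⟨hlo, hhi⟩ j => ⟨fun hj => ?_, fun hj => ?_⟩,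
    fun h => ⟨fun j hj => (h j).1 (hj ▸ j.castSucc_lt_succ), fun j hj => (h j).2 hj.ge⟩⟩
  · obtain ⟨k, rfl⟩ := Fin.exists_succ_eq.2 (Fin.ne_zero_of_lt hj)
    exact (hx.monotone (Fin.castSucc_lt_succ_iff.1 hj)).trans_lt (hlo k rfl)
  · obtain ⟨k, rfl⟩ :=
      Fin.exists_castSucc_eq.2 (Fin.ne_last_of_lt (lt_of_le_of_lt hj j.castSucc_lt_last))
    exact (hhi k rfl).trans_le (hx.monotone (Fin.castSucc_le_castSucc_iff.1 hj))

theorem not_inGap_apply (hx : StrictMono x) (i : Fin (n + 1)) (j : Fin n) :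
    ¬ InGap x i (x j) := by
  intro h
  rcases lt_or_ge j.castSucc i with hj | hj
  · exact lt_irrefl _ (((inGap_iff hx).1 h j).1 hj)
  · exact lt_irrefl _ (((inGap_iff hx).1 h j).2 hj)

theorem InGap.unique (hx : StrictMono x) {i i' : Fin (n + 1)} {y : ℕ} (hi : InGap x i y)
    (hi' : InGap x i' y) : i = i' := by
  wlog hlt : i < i' generalizing i i'
  · rcases (not_lt.1 hlt).lt_or_eq with h | h
    · exact (this hi' hi h).symm
    · exact h.symm
  set j := i.castPred (Fin.ne_last_of_lt hlt)
  exact absurd (((inGap_iff hx).1 hi j).2 (by simp [j]))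
    (((inGap_iff hx).1 hi' j).1 (by simpa [j])).asymm

theorem val_lt_card_filter_iff (hx : StrictMono x) (y : ℕ) (j : Fin n) :
    (j : ℕ) < #{k | x k < y} ↔ x j < y := by
  constructor
  · intro hj
    by_contra hy
    have : #{k | x k < y} ≤ #(Finset.Iio j) := Finset.card_le_card fun k hk => by
      simp only [Finset.mem_filter, Finset.mem_univ, true_and] at hk
      exact Finset.mem_Iio.2 (hx.lt_iff_lt.1 (hk.trans_le (not_lt.1 hy)))
    rw [Fin.card_Iio] at this
    omega
  · intro hy
    have : #(Finset.Iic j) ≤ #{k | x k < y} := Finset.card_le_card fun k hk =>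
      Finset.mem_filter.2 ⟨Finset.mem_univ _, (hx.monotone (Finset.mem_Iic.1 hk)).trans_lt hy⟩
    rw [Fin.card_Iic] at this
    omega

theorem exists_inGap (hx : StrictMono x) {y : ℕ} (hy : ∀ j, x j ≠ y) : ∃ i, InGap x i y := by
  have hcard : #{k | x k < y} < n + 1 :=
    Nat.lt_succ_of_le ((Finset.card_le_univ _).trans_eq (Fintype.card_fin n))
  -- the gap containing `y` is indexed by the number of anchors before `y`
  refine ⟨⟨_, hcard⟩, (inGap_iff hx).2 fun j => ⟨fun hj => ?_, fun hj => ?_⟩⟩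
  · exact (val_lt_card_filter_iff hx y j).1 hj
  · have : ¬ x j < y := fun h => not_lt.2 hj (Fin.lt_def.2 ((val_lt_card_filter_iff hx y j).2 h))
    exact lt_of_le_of_ne (not_lt.1 this) (hy j).symm

end Gaps

section Anchored

variable {α : Type*} {n : ℕ}

def Anchored (Q : Fin n → α → Prop) (P : Fin (n + 1) → α → Prop) (l : List α)
    (x : Fin n → ℕ) : Prop :=
  StrictMono x ∧ (∀ i, ∃ h : x i < l.length, Q i l[x i]) ∧
    ∀ i y (hy : y < l.length), InGap x i y → P i l[y]

theorem exists_anchored_zero_iff {Q : Fin 0 → α → Prop} {P : Fin 1 → α → Prop} {l : List α} :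
    (∃ x, Anchored Q P l x) ↔ ∀ c ∈ l, P 0 c := by
  rw [List.forall_mem_iff_getElem]
  refine ⟨fun ⟨x, _, _, hP⟩ y hy => hP 0 y hy ⟨finZeroElim, finZeroElim⟩,
    fun hP => ⟨finZeroElim, finZeroElim, finZeroElim, fun i y hy _ => ?_⟩⟩
  rw [Fin.fin_one_eq_zero i]
  exact hP y hy

/-- The anchors of `w₀ ++ a :: v` with `w₀.length = m`, given the anchors `x` of `v`. -/
def consShift (m : ℕ) (x : Fin n → ℕ) : Fin (n + 1) → ℕ :=
  Fin.cons m fun j => m + (x j + 1)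

theorem strictMono_consShift_iff {m : ℕ} {x : Fin n → ℕ} :
    StrictMono (consShift m x) ↔ StrictMono x := by
  rw [consShift, Fin.strictMono_cons]
  simp only [StrictMono, add_lt_add_iff_left, add_lt_add_iff_right]
  exact and_iff_right fun _ => by omega

theorem inGap_consShift_zero {m y : ℕ} {x : Fin n → ℕ} : InGap (consShift m x) 0 y ↔ y < m := by
  simp [InGap, consShift]

theorem inGap_consShift_succ {m y : ℕ} {x : Fin n → ℕ} {i : Fin (n + 1)} :
    InGap (consShift m x) i.succ (m + (y + 1)) ↔ InGap x i y := by
  simp only [InGap, consShift, Fin.forall_fin_succ, Fin.cons_zero, Fin.cons_succ, Fin.succ_inj,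
    Fin.castSucc_zero, ← Fin.succ_castSucc, add_lt_add_iff_left, add_lt_add_iff_right]
  exact ⟨fun h => ⟨h.1.2, h.2.2⟩,
    fun h => ⟨⟨fun _ => by omega, h.1⟩, fun h0 => absurd h0.symm i.succ_ne_zero, h.2⟩⟩

theorem InGap.lt_of_consShift_succ {m y : ℕ} {x : Fin n → ℕ} {i : Fin (n + 1)}
    (h : InGap (consShift m x) i.succ y) : m < y := by
  refine (h.1 i rfl).trans_le' ?_
  cases i using Fin.cases <;> simp only [consShift, Fin.cons_zero, Fin.cons_succ] <;> omega

theorem anchored_append_cons_consShift_iff {Q : Fin (n + 1) → α → Prop}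
    {P : Fin (n + 1 + 1) → α → Prop} {w₀ v : List α} {a : α} {x : Fin n → ℕ} :
    Anchored Q P (w₀ ++ a :: v) (consShift w₀.length x) ↔
      Q 0 a ∧ (∀ c ∈ w₀, P 0 c) ∧ Anchored (fun i => Q i.succ) (fun i => P i.succ) v x := by
  simp only [Anchored, strictMono_consShift_iff, List.forall_mem_iff_getElem]
  constructor
  · rintro ⟨hx, hQ, hP⟩
    refine ⟨by simpa [consShift] using (hQ 0).2, fun y hy => ?_, hx, fun i => ?_,
      fun i y hy hi => ?_⟩
    · rw [← List.getElem_append_left (bs := a :: v) hy]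
      exact hP 0 y (by simp; omega) (inGap_consShift_zero.2 hy)
    · obtain ⟨h, hq⟩ := hQ i.succ
      exact ⟨by simpa [consShift] using h, by simpa [consShift] using hq⟩
    · have hPy := hP i.succ (w₀.length + (y + 1)) (by simpa) (inGap_consShift_succ.2 hi)
      simpa using hPy
  · rintro ⟨ha, hw₀, hx, hQ, hP⟩
    refine ⟨hx, Fin.cases ⟨by simp [consShift], by simpa [consShift]⟩ fun i => ?_,
      Fin.cases (fun y hy hy₀ => ?_) fun i y hy hi => ?_⟩
    · obtain ⟨h, hq⟩ := hQ i
      exact ⟨by simp [consShift]; omega, by simpa [consShift] using hq⟩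
    · have hy' := inGap_consShift_zero.1 hy₀
      simpa [List.getElem_append_left, hy'] using hw₀ y hy'
    · obtain ⟨k, rfl⟩ : ∃ k, y = w₀.length + (k + 1) :=
        ⟨y - (w₀.length + 1), by have := hi.lt_of_consShift_succ; omega⟩
      simpa using hP i k (by simpa using hy) (inGap_consShift_succ.1 hi)

theorem exists_anchored_succ_iff {Q : Fin (n + 1) → α → Prop} {P : Fin (n + 1 + 1) → α → Prop}
    {l : List α} :
    (∃ x, Anchored Q P l x) ↔ ∃ w₀ a v, l = w₀ ++ a :: v ∧ Q 0 a ∧ (∀ c ∈ w₀, P 0 c) ∧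
      ∃ x, Anchored (fun i => Q i.succ) (fun i => P i.succ) v x := by
  constructor
  · rintro ⟨x, hx⟩
    obtain ⟨hm, -⟩ := hx.2.1 0
    have hl : l = l.take (x 0) ++ l[x 0] :: l.drop (x 0 + 1) := by
      rw [List.getElem_cons_drop, List.take_append_drop]
    have hxe : x = consShift (l.take (x 0)).length fun j => x j.succ - (x 0 + 1) := by
      funext i
      cases i using Fin.cases with
      | zero => simp [consShift, hm.le]
      | succ i =>
        have := hx.1 i.succ_pos
        simp only [consShift, Fin.cons_succ, List.length_take, min_eq_left hm.le]
        omega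
    have hx' : Anchored Q P (l.take (x 0) ++ l[x 0] :: l.drop (x 0 + 1))
        (consShift (l.take (x 0)).length fun j => x j.succ - (x 0 + 1)) := by
      rwa [← hl, ← hxe]
    obtain ⟨hQ, hP, hv⟩ := anchored_append_cons_consShift_iff.1 hx'
    exact ⟨_, _, _, hl, hQ, hP, _, hv⟩
  · rintro ⟨w₀, a, v, rfl, hQ, hP, x, hx⟩
    exact ⟨_, anchored_append_cons_consShift_iff.2 ⟨hQ, hP, hx⟩⟩

end Anchored

section Transfer

variable {α β : Type*} {n : ℕ} {Q : Fin n → α → Prop} {P : Fin (n + 1) → α → Prop}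
  {Q' : Fin n → β → Prop} {P' : Fin (n + 1) → β → Prop} {R : α → β → Prop} {u : List α}
  {w : List β} {x : Fin n → ℕ}

theorem Anchored.of_forall₂ (hu : Anchored Q P u x) (huw : List.Forall₂ R u w)
    (hQ : ∀ i a b, Q i a → R a b → Q' i b) (hP : ∀ i a b, P i a → R a b → P' i b) :
    Anchored Q' P' w x := by
  obtain ⟨hlen, hR⟩ := List.forall₂_iff_get.1 huw
  refine ⟨hu.1, fun i => ?_, fun i y hy hi => ?_⟩
  · obtain ⟨h, hq⟩ := hu.2.1 i
    exact ⟨hlen ▸ h, hQ _ _ _ hq (hR _ _ _)⟩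
  · exact hP _ _ _ (hu.2.2 i y (hlen ▸ hy) hi) (hR _ _ _)

theorem Anchored.exists_forall₂ (hw : Anchored Q' P' w x)
    (hQ : ∀ i b, Q' i b → ∃ a, Q i a ∧ R a b) (hP : ∀ i b, P' i b → ∃ a, P i a ∧ R a b) :
    ∃ u, List.Forall₂ R u w ∧ Anchored Q P u x := by
  obtain ⟨hx, hwQ, hwP⟩ := hw
  have hletter : ∀ y (hy : y < w.length), ∃ a,
      (∀ i, x i = y → Q i a) ∧ (∀ i, InGap x i y → P i a) ∧ R a w[y] := by
    intro y hy
    by_cases hanchor : ∃ j, x j = y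
    · obtain ⟨j, rfl⟩ := hanchor
      obtain ⟨a, hQa, hRa⟩ := hQ j _ (hwQ j).2
      exact ⟨a, fun i hi => hx.injective hi ▸ hQa, fun i hi => (not_inGap_apply hx i j hi).elim,
        hRa⟩
    · obtain ⟨j, hj⟩ := exists_inGap hx (not_exists.1 hanchor)
      obtain ⟨a, hPa, hRa⟩ := hP j _ (hwP j y hy hj)
      exact ⟨a, fun i hi => hanchor ⟨i, hi⟩ |>.elim, fun i hi => hj.unique hx hi ▸ hPa, hRa⟩
  choose f hfQ hfP hfR using hletter
  refine ⟨List.ofFn fun k : Fin w.length => f k k.2, ?_, hx, fun i => ?_, fun i y hy hi => ?_⟩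
  · exact List.forall₂_iff_get.2 ⟨by simp, fun k _ hk => by simpa using hfR k hk⟩
  · have h := (hwQ i).1
    exact ⟨by simpa using h, by simpa using hfQ _ h i rfl⟩
  · simp only [List.length_ofFn] at hy
    simpa using hfP y hy i hi

end Transfer

section PolyLang

variable {σ : Type*}

theorem mem_polyLang_zero {s : Fin 1 → Set σ} {A : Fin 2 → Set (Set σ)} {u : Word σ} :
    u ∈ PolyLang 0 s A ↔
      ∃ w₀ a v, u = w₀ ++ a :: v ∧ a = s 0 ∧ (∀ c ∈ w₀, c ∈ A 0) ∧ ∀ c ∈ v, c ∈ A 1 := by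
  constructor
  · rintro ⟨ws, hws, rfl⟩
    exact ⟨ws 0, _, ws 1, by simp [List.ofFn_succ], rfl, hws 0, hws 1⟩
  · rintro ⟨w₀, _, v, rfl, rfl, h₀, h₁⟩
    exact ⟨![w₀, v], Fin.forall_fin_two.2 ⟨h₀, h₁⟩, by simp [List.ofFn_succ]⟩

theorem mem_polyLang_succ {t : ℕ} {s : Fin (t + 1 + 1) → Set σ}
    {A : Fin (t + 1 + 2) → Set (Set σ)} {u : Word σ} :
    u ∈ PolyLang (t + 1) s A ↔
      ∃ w₀ a v, u = w₀ ++ a :: v ∧ a = s 0 ∧ (∀ c ∈ w₀, c ∈ A 0) ∧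
        v ∈ PolyLang t (fun i => s i.succ) (fun i => A i.succ) := by
  constructor
  · rintro ⟨ws, hws, rfl⟩
    refine ⟨ws 0, _, _, ?_, rfl, hws 0, fun i => ws i.succ, fun i => hws i.succ, rfl⟩
    simp [List.ofFn_succ]
  · rintro ⟨w₀, _, v, rfl, rfl, h₀, ws, hws, rfl⟩
    refine ⟨Fin.cons w₀ ws, Fin.cases h₀ hws, ?_⟩
    simp [List.ofFn_succ]

theorem mem_polyLang_iff_exists_anchored {t : ℕ} {s : Fin (t + 1) → Set σ}
    {A : Fin (t + 2) → Set (Set σ)} {u : Word σ} :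
    u ∈ PolyLang t s A ↔ ∃ x, Anchored (fun i c => c = s i) (fun i c => c ∈ A i) u x := by
  induction t generalizing u with
  | zero =>
    rw [mem_polyLang_zero, exists_anchored_succ_iff]
    simp only [exists_anchored_zero_iff, Fin.succ_zero_eq_one]
  | succ t ih =>
    rw [mem_polyLang_succ, exists_anchored_succ_iff]
    simp only [ih]

theorem wLe_iff_forall₂ {u v : Word σ} : WLe u v ↔ List.Forall₂ (· ⊆ ·) u v :=
  List.forall₂_iff_get.symm

theorem mem_upClos_polyLang_iff {t : ℕ} {s : Fin (t + 1) → Set σ}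
    {A : Fin (t + 2) → Set (Set σ)} {w : Word σ} :
    w ∈ UpClos (PolyLang t s A) ↔
      ∃ x, Anchored (fun i c => s i ⊆ c) (fun i c => ∃ b ∈ A i, b ⊆ c) w x := by
  constructor
  · rintro ⟨u, hu, huw⟩
    obtain ⟨x, hu⟩ := mem_polyLang_iff_exists_anchored.1 hu
    exact ⟨x, hu.of_forall₂ (wLe_iff_forall₂.1 huw) (fun i a b ha hab => ha ▸ hab)
      fun i a b ha hab => ⟨a, ha, hab⟩⟩
  · rintro ⟨x, hw⟩
    obtain ⟨u, huw, hu⟩ := hw.exists_forall₂ (Q := fun i c => c = s i) (P := fun i c => c ∈ A i)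
      (fun i b hb => ⟨s i, rfl, hb⟩) fun i b hb => hb
    exact ⟨u, mem_polyLang_iff_exists_anchored.2 ⟨x, hu⟩, wLe_iff_forall₂.2 huw⟩

end PolyLang

theorem stmt_15_general (σ : Type*) (t : ℕ) (s : Fin (t + 1) → Set σ)
    (Asub : Fin (t + 2) → Set (Set σ)) (w : Word σ) :
    w ∈ UpClos (PolyLang t s Asub) ↔
      ∃ x : Fin (t + 1) → ℕ, StrictMono x ∧
        (∀ i : Fin (t + 1), ∃ h : x i < w.length, s i ⊆ w.get ⟨x i, h⟩) ∧
        (∀ (i : Fin (t + 2)) (y : ℕ) (hy : y < w.length),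
          (∀ j : Fin (t + 1), j.succ = i → x j < y) →
          (∀ j : Fin (t + 1), j.castSucc = i → y < x j) →
          ∃ b ∈ Asub i, b ⊆ w.get ⟨y, hy⟩) := by
  rw [mem_upClos_polyLang_iff]
  simp only [Anchored, InGap, and_imp]
  rfl

/-- The upward monotone closure of a polynomial language is exactly the set of
words admitting anchor positions `x₀ < ⋯ < x_t` with `s i ⊆ w[x i]`, such that
every position strictly between consecutive anchors (with the conventions
`x₋₁ = −∞`, `x_{t+1} = +∞`) carries a letter containing some letter of the
corresponding subalphabet as a subset. -/
theorem stmt_15 (σ : Type*) [Fintype σ] (t : ℕ) (s : Fin (t + 1) → Set σ)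
    (Asub : Fin (t + 2) → Set (Set σ)) (w : Word σ) :
    w ∈ UpClos (PolyLang t s Asub) ↔
      ∃ x : Fin (t + 1) → ℕ, StrictMono x ∧
        (∀ i : Fin (t + 1), ∃ h : x i < w.length, s i ⊆ w.get ⟨x i, h⟩) ∧
        (∀ (i : Fin (t + 2)) (y : ℕ) (hy : y < w.length),
          (∀ j : Fin (t + 1), j.succ = i → x j < y) →
          (∀ j : Fin (t + 1), j.castSucc = i → y < x j) →
          ∃ b ∈ Asub i, b ⊆ w.get ⟨y, hy⟩) :=
  stmt_15_general σ t s Asub w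
end

section
/- Monotonicity of a regular language is decidable: there is an algorithm (a computable procedure) that, given a finite monoid M, a monoid morphism h : A* → M determined by its values on the finite alphabet A = 𝒫(Σ), and an accepting set F ⊆ M with L = h⁻¹(F), decides whether L is monotone, by checking for all pairs of letters s ⊆ s' and all pairs (m, n) ∈ M² whether m·h(s)·n ∈ F implies m·h(s')·n ∈ F. -/
/-- Words over the finite alphabet `A = 𝒫(Σ)` of finite subsets of `σ`. -/
abbrev FWord (σ : Type*) := List (Finset σ)

def FWLe {σ : Type*} (u v : FWord σ) : Prop :=
  u.length = v.length ∧
    ∀ (i : ℕ) (hu : i < u.length) (hv : i < v.length), u.get ⟨i, hu⟩ ⊆ v.get ⟨i, hv⟩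

def FMono {σ : Type*} (L : Set (FWord σ)) : Prop :=
  ∀ ⦃u v : FWord σ⦄, u ∈ L → FWLe u v → v ∈ L

/-- Correctness of the algorithm deciding monotonicity: given a finite monoid
`M`, a morphism `h : A* → M`, and an accepting set `F` with `L = h⁻¹(F)`, the
language `L` is monotone iff for all pairs of letters `s ⊆ s'` and all pairs
`(m, n)` of elements of `M` in the image `h(A*)`, `m·h(s)·n ∈ F` implies
`m·h(s')·n ∈ F`.  Since `Σ`, `A` and `M` are finite and `h(A*)` is computable
from the values of `h` on letters, this check yields a decision procedure. -/
theorem stmt_16 (σ : Type*) [Fintype σ] [DecidableEq σ]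
    (M : Type*) [Monoid M] [Fintype M] [DecidableEq M]
    (h : FWord σ → M)
    (hone : h [] = 1)
    (hmul : ∀ u v : FWord σ, h (u ++ v) = h u * h v)
    (F : Set M) (L : Set (FWord σ)) (hL : L = h ⁻¹' F) :
    FMono L ↔ ∀ s s' : Finset σ, s ⊆ s' → ∀ m n : M,
      m ∈ Set.range h → n ∈ Set.range h →
      (m * h [s] * n ∈ F → m * h [s'] * n ∈ F) := by
  have hFW : ∀ u v : FWord σ, FWLe u v ↔ List.Forall₂ (· ⊆ ·) u v := by
    intro u v
    rw [List.forall₂_iff_get]; exact Iff.rfl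
  subst hL
  constructor
  · rintro hm s s' hss m n ⟨u, rfl⟩ ⟨v, rfl⟩ hF
    have h1 : u ++ [s] ++ v ∈ h ⁻¹' F := by
      simp only [Set.mem_preimage, hmul]; exact hF
    have h2 := hm h1 (by
      rw [hFW]
      exact List.rel_append (List.rel_append (List.forall₂_refl u)
        (List.Forall₂.cons hss List.Forall₂.nil)) (List.forall₂_refl v))
    simpa only [Set.mem_preimage, hmul] using h2
  · intro hc
    have key : ∀ u v : FWord σ, List.Forall₂ (· ⊆ ·) u v →
        ∀ m : M, m ∈ Set.range h → m * h u ∈ F → m * h v ∈ F := by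
      intro u v huv
      induction huv with
      | nil => intro m _ hF; exact hF
      | @cons s s' u' v' hss _ ih =>
        rintro m ⟨w, rfl⟩ hF
        have h1 : h w * h [s] * h u' ∈ F := by
          have : (s :: u') = [s] ++ u' := rfl
          rw [this, hmul] at hF
          rwa [mul_assoc]
        have h2 : h w * h [s'] * h u' ∈ F :=
          hc s s' hss _ _ ⟨w, rfl⟩ ⟨u', rfl⟩ h1
        have h3 : h (w ++ [s']) * h u' ∈ F := by rwa [hmul]
        have h4 := ih (h (w ++ [s'])) ⟨w ++ [s'], rfl⟩ h3
        have : (s' :: v') = [s'] ++ v' := rfl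
        rw [this, hmul, ← mul_assoc]
        rwa [hmul] at h4
    intro u v hu huv
    have := key u v ((hFW u v).mp huv) 1 ⟨[], hone⟩ (by rwa [one_mul])
    rwa [Set.mem_preimage, ← one_mul (h v)]
end

section
/- The language [K] = (([a][#][b][#][c][#])*)↑ ∪ A*·1·(A⁴ \ {0000})·1·A* ∪ A*·11111·A* over the two-letter ordered alphabet {0,1} (with 0 ≤ 1) is monotone, where [a] = 001, [b] = 010, [c] = 100, [#] = 100001, and M↑ denotes upward closure under the pointwise letter order. -/
/-- Pointwise order on words over the two-letter alphabet `{0, 1}` (modelled by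
`Bool` with `false ≤ true`): same length and letterwise order. -/
def BLe (u v : List Bool) : Prop :=
  u.length = v.length ∧
    ∀ (i : ℕ) (hu : i < u.length) (hv : i < v.length), u.get ⟨i, hu⟩ ≤ v.get ⟨i, hv⟩

def BMono (L : Set (List Bool)) : Prop :=
  ∀ ⦃u v : List Bool⦄, u ∈ L → BLe u v → v ∈ L

def BUpClos (M : Set (List Bool)) : Set (List Bool) := {v | ∃ u ∈ M, BLe u v}

/-- `[a] = 001`. -/
def codeA : List Bool := [false, false, true]
/-- `[b] = 010`. -/
def codeB : List Bool := [false, true, false]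
/-- `[c] = 100`. -/
def codeC : List Bool := [true, false, false]
/-- `[#] = 100001`. -/
def codeSep : List Bool := [true, false, false, false, false, true]

/-- The base block `[a][#][b][#][c][#]`. -/
def baseBlock : List Bool := codeA ++ codeSep ++ codeB ++ codeSep ++ codeC ++ codeSep

/-- `(([a][#][b][#][c][#])*)↑`. -/
def lang1 : Set (List Bool) :=
  BUpClos {w | ∃ n : ℕ, w = (List.replicate n baseBlock).flatten}

/-- `A*·1·(A⁴ \ {0000})·1·A*`. -/
def lang2 : Set (List Bool) :=
  {w | ∃ x u y : List Bool, u.length = 4 ∧ u ≠ List.replicate 4 false ∧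
    w = x ++ [true] ++ u ++ [true] ++ y}

/-- `A*·11111·A*`. -/
def lang3 : Set (List Bool) :=
  {w | ∃ x y : List Bool, w = x ++ List.replicate 5 true ++ y}

lemma BLe_iff {u v : List Bool} : BLe u v ↔ List.Forall₂ (· ≤ ·) u v := by
  rw [List.forall₂_iff_get]; rfl

lemma BLe_split {x u v : List Bool} (h : BLe (x ++ u) v) :
    ∃ x' u', v = x' ++ u' ∧ BLe x x' ∧ BLe u u' := by
  rw [BLe_iff] at h
  refine ⟨v.take x.length, v.drop x.length, (List.take_append_drop _ _).symm, ?_, ?_⟩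
  · rw [BLe_iff]
    have := List.forall₂_take x.length h
    simpa using this
  · rw [BLe_iff]
    have := List.forall₂_drop x.length h
    simpa using this

lemma BLe_trans {u v w : List Bool} (h1 : BLe u v) (h2 : BLe v w) : BLe u w := by
  obtain ⟨l1, g1⟩ := h1
  obtain ⟨l2, g2⟩ := h2
  refine ⟨l1.trans l2, fun i hu hw => ?_⟩
  have hv : i < v.length := l1 ▸ hu
  exact le_trans (g1 i hu hv) (g2 i hv hw)

lemma BLe_rep_true {n : ℕ} {v : List Bool} (h : BLe (List.replicate n true) v) :
    v = List.replicate n true := by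
  obtain ⟨l, g⟩ := h
  simp only [List.length_replicate] at l
  refine List.eq_replicate_iff.2 ⟨l.symm, fun b hb => ?_⟩
  obtain ⟨i, hi, rfl⟩ := List.mem_iff_get.1 hb
  have hlt : i.1 < (List.replicate n true).length := by simp [l]
  have := g i.1 hlt i.isLt
  simp only [List.get_eq_getElem, List.getElem_replicate] at this
  simpa using le_antisymm (Bool.le_true _) this

lemma BLe_singleton_true {v : List Bool} (h : BLe [true] v) : v = [true] := by
  have := BLe_rep_true (n := 1) (by simpa using h)
  simpa using this

lemma BLe_ne_rep_false {n : ℕ} {u v : List Bool} (h : BLe u v)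
    (hu : u ≠ List.replicate n false) (hl : u.length = n) : v ≠ List.replicate n false := by
  intro hv
  apply hu
  obtain ⟨l, g⟩ := h
  subst hv
  simp only [List.length_replicate] at l
  refine List.eq_replicate_iff.2 ⟨hl, fun b hb => ?_⟩
  obtain ⟨i, hi, rfl⟩ := List.mem_iff_get.1 hb
  have hlt : i.1 < (List.replicate n false).length := by simp [← l]
  have := g i.1 i.isLt hlt
  simp only [List.get_eq_getElem, List.getElem_replicate] at this
  simpa using le_antisymm this (Bool.false_le _)

/-- The language `[K]` is monotone. -/
theorem stmt_17 : BMono (lang1 ∪ lang2 ∪ lang3) := by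
  rintro u v hu huv
  rcases hu with (h1 | h2) | h3
  · obtain ⟨w, hw, hle⟩ := h1
    exact Or.inl (Or.inl ⟨w, hw, BLe_trans hle huv⟩)
  · obtain ⟨x, m, y, hm4, hm0, rfl⟩ := h2
    refine Or.inl (Or.inr ?_)
    obtain ⟨p1, r1, rfl, hA, hy⟩ := BLe_split (x := x ++ [true] ++ m ++ [true]) huv
    obtain ⟨p2, t2, rfl, hB, ht2⟩ := BLe_split (x := x ++ [true] ++ m) hA
    obtain ⟨p3, m', rfl, hC, hm'⟩ := BLe_split (x := x ++ [true]) hB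
    obtain ⟨x', t1, rfl, hx', ht1⟩ := BLe_split (x := x) hC
    refine ⟨x', m', r1, hm'.1 ▸ hm4, BLe_ne_rep_false hm' hm0 hm4, ?_⟩
    rw [BLe_singleton_true ht1, BLe_singleton_true ht2]
  · obtain ⟨x, y, rfl⟩ := h3
    refine Or.inr ?_
    obtain ⟨p1, r1, rfl, hA, hy⟩ := BLe_split (x := x ++ List.replicate 5 true) huv
    obtain ⟨x', t, rfl, hx', ht⟩ := BLe_split (x := x) hA
    exact ⟨x', r1, by rw [BLe_rep_true ht]⟩
end

section
/- In the Ehrenfeucht–Fraïssé-style positive game EF_k^{n+}, winning strategies for Duplicator compose with game extension: if Duplicator wins EF_{k+1}^{n+}(u₀, u₁) from initial configuration (ν₀, ν₁), then Duplicator wins EF_k^{n+}(u₀, u₁) from (ν₀, ν₁); moreover if Duplicator wins from (ν₀, ν₁) then for every negation-free n-variable FO formula φ of quantifier rank at most k, (u₀, ν₀) ⊨ φ implies (u₁, ν₁) ⊨ φ. -/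
/-- Consistency of a configuration in the positive EF game: all binary position
predicates (`<`, `≤`, successor) induced by the token positions agree between
the two words, and unary letter predicates transfer from `u₀` to `u₁`. -/
def Agree {σ : Type*} {n : ℕ} (u₀ u₁ : Word σ) (ν₀ ν₁ : Fin n → ℕ) : Prop :=
  (∀ i j : Fin n,
      (ν₀ i < ν₀ j ↔ ν₁ i < ν₁ j) ∧
      (ν₀ i ≤ ν₀ j ↔ ν₁ i ≤ ν₁ j) ∧
      (ν₀ j = ν₀ i + 1 ↔ ν₁ j = ν₁ i + 1)) ∧
  (∀ (i : Fin n) (a : σ),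
      (∃ h : ν₀ i < u₀.length, a ∈ u₀.get ⟨ν₀ i, h⟩) →
      (∃ h : ν₁ i < u₁.length, a ∈ u₁.get ⟨ν₁ i, h⟩))

/-- Duplicator wins the `k`-round positive EF game `EF_k^{n+}(u₀, u₁)` from the
configuration `(ν₀, ν₁)`: each round, Spoiler places/moves a token `i` on a
position of one of the words, and Duplicator must answer on the other word so
as to keep the configuration consistent. -/
def DWin {σ : Type*} {n : ℕ} (u₀ u₁ : Word σ) : ℕ → (Fin n → ℕ) → (Fin n → ℕ) → Prop
  | 0, ν₀, ν₁ => Agree u₀ u₁ ν₀ ν₁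
  | k + 1, ν₀, ν₁ => Agree u₀ u₁ ν₀ ν₁ ∧
      (∀ (i : Fin n) (p : ℕ), p < u₀.length →
        ∃ q : ℕ, q < u₁.length ∧
          DWin u₀ u₁ k (Function.update ν₀ i p) (Function.update ν₁ i q)) ∧
      (∀ (i : Fin n) (q : ℕ), q < u₁.length →
        ∃ p : ℕ, p < u₀.length ∧
          DWin u₀ u₁ k (Function.update ν₀ i p) (Function.update ν₁ i q))

/-- Negation-free first-order formulas with `n` variables. -/
inductive FOp (σ : Type*) (n : ℕ) : Type _
  | bot : FOp σ n
  | top : FOp σ n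
  | lt (x y : Fin n) : FOp σ n
  | le (x y : Fin n) : FOp σ n
  | succ (x y : Fin n) : FOp σ n
  | pred (a : σ) (x : Fin n) : FOp σ n
  | and (φ ψ : FOp σ n) : FOp σ n
  | or (φ ψ : FOp σ n) : FOp σ n
  | ex (x : Fin n) (φ : FOp σ n) : FOp σ n
  | all (x : Fin n) (φ : FOp σ n) : FOp σ n

/-- Quantifier rank. -/
def qr {σ : Type*} {n : ℕ} : FOp σ n → ℕ
  | .bot => 0
  | .top => 0
  | .lt _ _ => 0
  | .le _ _ => 0
  | .succ _ _ => 0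
  | .pred _ _ => 0
  | .and φ ψ => max (qr φ) (qr ψ)
  | .or φ ψ => max (qr φ) (qr ψ)
  | .ex _ φ => qr φ + 1
  | .all _ φ => qr φ + 1

def FOSat {σ : Type*} {n : ℕ} (u : Word σ) (ν : Fin n → ℕ) : FOp σ n → Prop
  | .bot => False
  | .top => True
  | .lt x y => ν x < ν y
  | .le x y => ν x ≤ ν y
  | .succ x y => ν y = ν x + 1
  | .pred a x => ∃ h : ν x < u.length, a ∈ u.get ⟨ν x, h⟩
  | .and φ ψ => FOSat u ν φ ∧ FOSat u ν ψ
  | .or φ ψ => FOSat u ν φ ∨ FOSat u ν ψ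
  | .ex x φ => ∃ i : ℕ, i < u.length ∧ FOSat u (Function.update ν x i) φ
  | .all x φ => ∀ i : ℕ, i < u.length → FOSat u (Function.update ν x i) φ

lemma DWin_agree {σ : Type*} {n : ℕ} {u₀ u₁ : Word σ} :
    ∀ {k} {ν₀ ν₁ : Fin n → ℕ}, DWin u₀ u₁ k ν₀ ν₁ → Agree u₀ u₁ ν₀ ν₁
  | 0, _, _, h => h
  | _ + 1, _, _, h => h.1

lemma DWin_mono {σ : Type*} {n : ℕ} {u₀ u₁ : Word σ} :
    ∀ (k : ℕ) (ν₀ ν₁ : Fin n → ℕ), DWin u₀ u₁ (k + 1) ν₀ ν₁ → DWin u₀ u₁ k ν₀ ν₁ := by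
  intro k
  induction k with
  | zero => intro ν₀ ν₁ h; exact h.1
  | succ k ih =>
    rintro ν₀ ν₁ ⟨hA, hf, hb⟩
    refine ⟨hA, ?_, ?_⟩
    · intro i p hp
      obtain ⟨q, hq, hw⟩ := hf i p hp
      exact ⟨q, hq, ih _ _ hw⟩
    · intro i q hq
      obtain ⟨p, hp, hw⟩ := hb i q hq
      exact ⟨p, hp, ih _ _ hw⟩

lemma DWin_transfer {σ : Type*} {n : ℕ} {u₀ u₁ : Word σ} (φ : FOp σ n) :
    ∀ (k : ℕ) (ν₀ ν₁ : Fin n → ℕ), DWin u₀ u₁ k ν₀ ν₁ → qr φ ≤ k →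
      FOSat u₀ ν₀ φ → FOSat u₁ ν₁ φ := by
  induction φ with
  | bot => intro _ _ _ _ _ h; exact h.elim
  | top => intro _ _ _ _ _ _; trivial
  | lt x y => intro k ν₀ ν₁ hw _ h; exact ((DWin_agree hw).1 x y).1.mp h
  | le x y => intro k ν₀ ν₁ hw _ h; exact ((DWin_agree hw).1 x y).2.1.mp h
  | succ x y => intro k ν₀ ν₁ hw _ h; exact ((DWin_agree hw).1 x y).2.2.mp h
  | pred a x => intro k ν₀ ν₁ hw _ h; exact (DWin_agree hw).2 x a h
  | and φ ψ ihφ ihψ =>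
    intro k ν₀ ν₁ hw hq h
    exact ⟨ihφ k ν₀ ν₁ hw (le_trans (le_max_left _ _) hq) h.1,
           ihψ k ν₀ ν₁ hw (le_trans (le_max_right _ _) hq) h.2⟩
  | or φ ψ ihφ ihψ =>
    intro k ν₀ ν₁ hw hq h
    exact h.elim (fun h => Or.inl (ihφ k ν₀ ν₁ hw (le_trans (le_max_left _ _) hq) h))
      (fun h => Or.inr (ihψ k ν₀ ν₁ hw (le_trans (le_max_right _ _) hq) h))
  | ex x φ ih =>
    intro k ν₀ ν₁ hw hq h
    obtain ⟨m, rfl⟩ : ∃ m, k = m + 1 := ⟨k - 1, by simp [qr] at hq; omega⟩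
    obtain ⟨p, hp, hsat⟩ := h
    obtain ⟨q, hq', hw'⟩ := hw.2.1 x p hp
    exact ⟨q, hq', ih m _ _ hw' (by simpa [qr] using hq) hsat⟩
  | all x φ ih =>
    intro k ν₀ ν₁ hw hq h
    obtain ⟨m, rfl⟩ : ∃ m, k = m + 1 := ⟨k - 1, by simp [qr] at hq; omega⟩
    intro q hq'
    obtain ⟨p, hp, hw'⟩ := hw.2.2 x q hq'
    exact ih m _ _ hw' (by simpa [qr] using hq) (h p hp)

/-- Winning strategies for Duplicator compose with game extension, and a win in
`k` rounds transfers every negation-free `n`-variable formula of quantifier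
rank at most `k` from `(u₀, ν₀)` to `(u₁, ν₁)`. -/
theorem stmt_18 (σ : Type*) [Fintype σ] (n k : ℕ) (u₀ u₁ : Word σ)
    (ν₀ ν₁ : Fin n → ℕ) :
    (DWin u₀ u₁ (k + 1) ν₀ ν₁ → DWin u₀ u₁ k ν₀ ν₁) ∧
    (DWin u₀ u₁ k ν₀ ν₁ →
      ∀ φ : FOp σ n, qr φ ≤ k → FOSat u₀ ν₀ φ → FOSat u₁ ν₁ φ) := by
  exact ⟨DWin_mono k ν₀ ν₁, fun hw φ hq => DWin_transfer φ k ν₀ ν₁ hw hq⟩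
end
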